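/- The function f(z₁,z₂,z₃,z₄) = 5πi - (π²+z₁²)/4 + z₃ - 2z₄ + (1/4)·(z₁-πi)·(z₂-z₁+z₃+z₄) + (z₁-πi)·e^{3(z₂-z₁)+5z₃+z₄+7} - (e^{3(z₂-z₁)+5z₃+z₄+7} + (1/4)·(z₂-z₁+z₃+z₄-2πi))² on ℂ⁴ satisfies (∂f/∂z₁ + ∂f/∂z₂)² + f(z₁+πi, z₂+2πi, z₃-πi, z₄+2πi) = z₃ - 2z₄ identically on ℂ⁴. -/

import Mathlib

/-! The exponent `3 (z₂ - z₁) + 5 z₃ + z₄ + 7` of `f5` is unchanged both along the diagonal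
`(z₁ + t, z₂ + t)` and under the shift `c = (πi, 2πi, -πi, 2πi)`. Hence `∂₁f + ∂₂f`, the derivative
of `t ↦ f(z₁ + t, z₂ + t, z₃, z₄)` at `0`, is the elementary expression `f5DiagDeriv`, and
`f(z + c)` equals `z₃ - 2 z₄ - f5DiagDeriv²` by a polynomial identity (using `i² = -1`). -/

noncomputable def f5 (z₁ z₂ z₃ z₄ : ℂ) : ℂ :=
  5 * (Real.pi : ℂ) * Complex.I - ((Real.pi : ℂ) ^ 2 + z₁ ^ 2) / 4 + z₃ - 2 * z₄
    + (1 / 4) * (z₁ - (Real.pi : ℂ) * Complex.I) * (z₂ - z₁ + z₃ + z₄)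
    + (z₁ - (Real.pi : ℂ) * Complex.I) * Complex.exp (3 * (z₂ - z₁) + 5 * z₃ + z₄ + 7)
    - (Complex.exp (3 * (z₂ - z₁) + 5 * z₃ + z₄ + 7)
        + (1 / 4) * (z₂ - z₁ + z₃ + z₄ - 2 * (Real.pi : ℂ) * Complex.I)) ^ 2

theorem deriv_add_deriv_eq_deriv_diagonal {𝕜 F : Type*} [NontriviallyNormedField 𝕜]
    [NormedAddCommGroup F] [NormedSpace 𝕜 F] {f : 𝕜 → 𝕜 → F} {a b : 𝕜}
    (hf : DifferentiableAt 𝕜 (Function.uncurry f) (a, b)) :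
    deriv (fun w => f w b) a + deriv (fun w => f a w) b
      = deriv (fun t => f (a + t) (b + t)) 0 := by
  have hL := hf.hasFDerivAt
  set L := fderiv 𝕜 (Function.uncurry f) (a, b)
  have h₁ : HasDerivAt (fun w => f w b) (L (1, 0)) a :=
    hL.comp_hasDerivAt (f := fun w => (w, b)) a
      ((hasDerivAt_id' a).prodMk (hasDerivAt_const a b))
  have h₂ : HasDerivAt (fun w => f a w) (L (0, 1)) b :=
    hL.comp_hasDerivAt (f := fun w => (a, w)) b
      ((hasDerivAt_const b a).prodMk (hasDerivAt_id' b))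
  have h₁₂ : HasDerivAt (fun t => f (a + t) (b + t)) (L (1, 1)) 0 :=
    hL.comp_hasDerivAt_of_eq (f := fun t => (a + t, b + t)) 0
      (((hasDerivAt_id' 0).const_add a).prodMk ((hasDerivAt_id' 0).const_add b)) (by simp)
  rw [h₁.deriv, h₂.deriv, h₁₂.deriv, ← map_add, Prod.mk_add_mk, add_zero, zero_add]

open Complex
open scoped Real

noncomputable def f5DiagDeriv (z₁ z₂ z₃ z₄ : ℂ) : ℂ :=
  -z₁ / 2 + (z₂ - z₁ + z₃ + z₄) / 4 + exp (3 * (z₂ - z₁) + 5 * z₃ + z₄ + 7)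

theorem differentiableAt_uncurry_f5 (z₁ z₂ z₃ z₄ : ℂ) :
    DifferentiableAt ℂ (Function.uncurry fun w v => f5 w v z₃ z₄) (z₁, z₂) := by
  unfold f5 Function.uncurry
  fun_prop

theorem f5_add_diagonal (z₁ z₂ z₃ z₄ t : ℂ) :
    f5 (z₁ + t) (z₂ + t) z₃ z₄ = f5 z₁ z₂ z₃ z₄ + t * f5DiagDeriv z₁ z₂ z₃ z₄ - t ^ 2 / 4 := by
  unfold f5 f5DiagDeriv
  rw [add_sub_add_right_eq_sub]
  ring

theorem deriv_f5_diagonal (z₁ z₂ z₃ z₄ : ℂ) :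
    deriv (fun t => f5 (z₁ + t) (z₂ + t) z₃ z₄) 0 = f5DiagDeriv z₁ z₂ z₃ z₄ := by
  simp only [f5_add_diagonal]
  have := (((hasDerivAt_id' (0 : ℂ)).mul_const (f5DiagDeriv z₁ z₂ z₃ z₄)).const_add
    (f5 z₁ z₂ z₃ z₄)).sub ((hasDerivAt_pow 2 (0 : ℂ)).div_const 4)
  exact this.deriv.trans (by ring)

theorem f5_add_shift (z₁ z₂ z₃ z₄ : ℂ) :
    f5 (z₁ + π * I) (z₂ + 2 * π * I) (z₃ - π * I) (z₄ + 2 * π * I)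
      = z₃ - 2 * z₄ - f5DiagDeriv z₁ z₂ z₃ z₄ ^ 2 := by
  have hexp : 3 * (z₂ + 2 * π * I - (z₁ + π * I)) + 5 * (z₃ - π * I) + (z₄ + 2 * π * I) + 7
      = 3 * (z₂ - z₁) + 5 * z₃ + z₄ + 7 := by ring
  unfold f5 f5DiagDeriv
  rw [hexp]
  linear_combination (-(π : ℂ) ^ 2 / 4) * I_sq

theorem stmt_5 : ∀ z₁ z₂ z₃ z₄ : ℂ,
    (deriv (fun w => f5 w z₂ z₃ z₄) z₁ + deriv (fun w => f5 z₁ w z₃ z₄) z₂) ^ 2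
      + f5 (z₁ + Real.pi * Complex.I) (z₂ + 2 * Real.pi * Complex.I)
          (z₃ - Real.pi * Complex.I) (z₄ + 2 * Real.pi * Complex.I)
      = z₃ - 2 * z₄ := by
  intro z₁ z₂ z₃ z₄
  rw [deriv_add_deriv_eq_deriv_diagonal (differentiableAt_uncurry_f5 z₁ z₂ z₃ z₄),
    deriv_f5_diagonal, f5_add_shift]
  ring
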